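/- arXiv:1708.00557 — 2 statements merged into one kernel-verified Lean document; each statement's English description precedes it below -/
import Mathlib

section
/- Let A ∈ ℝ^{m×n}, x ∈ ℝ^n, r ∈ ℝ^m with r ≠ 0, and let M be an invertible symmetric n×n matrix. Define K = M⁻¹ ( ((2/‖r‖²) Aᵀ r rᵀ − Aᵀ) ([xᵀ, −1] ⊗ I_m) − [I_n ⊗ rᵀ, 0_{n×m}] ). Then K Kᵀ = M⁻¹ ( (1+‖x‖²) Aᵀ A − Aᵀ r xᵀ − x rᵀ A + ‖r‖² I_n ) M⁻¹. -/
open Matrix Kronecker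

/-- The Euclidean norm of a real vector. -/
noncomputable def stlsEnorm {n : Type*} [Fintype n] (v : n → ℝ) : ℝ :=
  Real.sqrt (∑ i, v i ^ 2)

/-- The row vector `[xᵀ, −1]` of length `n+1`. -/
def rowAug {n : ℕ} (x : Fin n → ℝ) : Matrix Unit (Fin n ⊕ Unit) ℝ :=
  Matrix.of fun _ j => Sum.elim x (fun _ => (-1 : ℝ)) j

/-- The STLS Fréchet derivative matrix
`K = M⁻¹(((2/‖r‖²)Aᵀ r rᵀ − Aᵀ)([xᵀ,−1] ⊗ I_m) − [I_n ⊗ rᵀ, 0_{n×m}])`. -/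
noncomputable def KSTLS {m n : ℕ} (A : Matrix (Fin m) (Fin n) ℝ) (x : Fin n → ℝ)
    (r : Fin m → ℝ) (M : Matrix (Fin n) (Fin n) ℝ) :
    Matrix (Fin n) ((Fin n ⊕ Unit) × Fin m) ℝ :=
  M⁻¹ *
    (((2 / stlsEnorm r ^ 2) • (Aᵀ * vecMulVec r r) - Aᵀ) *
        Matrix.reindex (Equiv.punitProd (Fin m)) (Equiv.refl _)
          (rowAug x ⊗ₖ (1 : Matrix (Fin m) (Fin m) ℝ)) -
      Matrix.reindex (Equiv.prodPUnit (Fin n))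
        ((Equiv.sumProdDistrib (Fin n) Unit (Fin m)).symm)
        (fromCols ((1 : Matrix (Fin n) (Fin n) ℝ) ⊗ₖ Matrix.of (fun (_ : Unit) k => r k))
          (0 : Matrix (Fin n × Unit) (Unit × Fin m) ℝ)))

/-! With the Householder reflection `H = I − 2 r rᵀ / ‖r‖²` one has
`(2/‖r‖²) Aᵀ r rᵀ − Aᵀ = −Aᵀ H`, so `K = −M⁻¹ (Aᵀ H P + Q)` with `P = [xᵀ, −1] ⊗ I_m` and
`Q = [I_n ⊗ rᵀ, 0]`. Since `H` is orthogonal with `H r = −r`, and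
`P Pᵀ = (1 + ‖x‖²) I`, `P Qᵀ = r xᵀ`, `Q Qᵀ = ‖r‖² I`, expanding `(Aᵀ H P + Q)(Aᵀ H P + Q)ᵀ`
gives the bracket; symmetry of `M` turns `M⁻ᵀ` into `M⁻¹`. -/

lemma stlsEnorm_sq {ι : Type*} [Fintype ι] (v : ι → ℝ) : stlsEnorm v ^ 2 = v ⬝ᵥ v := by
  rw [stlsEnorm, Real.sq_sqrt (by positivity)]
  simp only [dotProduct, sq]

section Householder

variable {ι : Type*} [Fintype ι]

lemma two_div_dotProduct_self_mul (r : ι → ℝ) (hr : r ≠ 0) : 2 / (r ⬝ᵥ r) * (r ⬝ᵥ r) = 2 :=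
  div_mul_cancel₀ 2 (mt dotProduct_self_eq_zero.1 hr)

variable [DecidableEq ι]

/-- At `r = 0` the junk value `2 / 0 = 0` makes this `1`. -/
noncomputable def householder (r : ι → ℝ) : Matrix ι ι ℝ :=
  1 - (2 / (r ⬝ᵥ r)) • vecMulVec r r

lemma householder_transpose (r : ι → ℝ) : (householder r)ᵀ = householder r := by
  simp [householder]

lemma householder_mulVec_self (r : ι → ℝ) : householder r *ᵥ r = -r := by
  rcases eq_or_ne r 0 with rfl | hr
  · simp
  rw [householder, sub_mulVec, one_mulVec, smul_mulVec, vecMulVec_mulVec, op_smul_eq_smul,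
    smul_smul, two_div_dotProduct_self_mul r hr]
  module

lemma householder_mem_orthogonalGroup (r : ι → ℝ) : householder r ∈ orthogonalGroup ι ℝ := by
  rw [mem_orthogonalGroup_iff, householder_transpose, householder, sub_mul, mul_sub, mul_sub,
    smul_mul_smul, vecMulVec_mul_vecMulVec, vecMulVec_smul]
  rcases eq_or_ne r 0 with rfl | hr
  · simp
  rw [smul_smul, mul_assoc, two_div_dotProduct_self_mul r hr]
  simp only [one_mul, mul_one]
  module

end Householder

/-- `[xᵀ, −1] ⊗ I_m`, indexed as in `KSTLS`. -/
noncomputable def rowAugKron {n : ℕ} (m : ℕ) (x : Fin n → ℝ) :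
    Matrix (Fin m) ((Fin n ⊕ Unit) × Fin m) ℝ :=
  Matrix.reindex (Equiv.punitProd (Fin m)) (Equiv.refl _)
    (rowAug x ⊗ₖ (1 : Matrix (Fin m) (Fin m) ℝ))

/-- `[I_n ⊗ rᵀ, 0_{n×m}]`, indexed as in `KSTLS`. -/
noncomputable def oneKronRowZero {m : ℕ} (n : ℕ) (r : Fin m → ℝ) :
    Matrix (Fin n) ((Fin n ⊕ Unit) × Fin m) ℝ :=
  Matrix.reindex (Equiv.prodPUnit (Fin n))
    ((Equiv.sumProdDistrib (Fin n) Unit (Fin m)).symm)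
    (fromCols ((1 : Matrix (Fin n) (Fin n) ℝ) ⊗ₖ Matrix.of (fun (_ : Unit) k => r k))
      (0 : Matrix (Fin n × Unit) (Unit × Fin m) ℝ))

section Kronecker

variable {m n : ℕ}

@[simp]
lemma rowAugKron_apply (x : Fin n → ℝ) (i : Fin m) (s : Fin n ⊕ Unit) (k : Fin m) :
    rowAugKron m x i (s, k) =
      Sum.elim x (fun _ => -1) s * (1 : Matrix (Fin m) (Fin m) ℝ) i k := by
  simp [rowAugKron, rowAug]

@[simp]
lemma oneKronRowZero_apply_inl (r : Fin m → ℝ) (a j : Fin n) (k : Fin m) :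
    oneKronRowZero n r a (Sum.inl j, k) = (1 : Matrix (Fin n) (Fin n) ℝ) a j * r k := by
  simp [oneKronRowZero]

@[simp]
lemma oneKronRowZero_apply_inr (r : Fin m → ℝ) (a : Fin n) (u : Unit) (k : Fin m) :
    oneKronRowZero n r a (Sum.inr u, k) = 0 := by
  simp [oneKronRowZero]

lemma rowAugKron_mul_transpose_self (x : Fin n → ℝ) :
    rowAugKron m x * (rowAugKron m x)ᵀ =
      (1 + stlsEnorm x ^ 2) • (1 : Matrix (Fin m) (Fin m) ℝ) := by
  ext i i'
  simp only [Matrix.mul_apply, Fintype.sum_prod_type]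
  simp [Fintype.sum_sum_type, Matrix.one_apply, stlsEnorm_sq, dotProduct, add_comm]

lemma rowAugKron_mul_transpose_oneKronRowZero (x : Fin n → ℝ) (r : Fin m → ℝ) :
    rowAugKron m x * (oneKronRowZero n r)ᵀ = vecMulVec r x := by
  ext i a
  simp only [Matrix.mul_apply, Fintype.sum_prod_type]
  simp [Fintype.sum_sum_type, Matrix.one_apply, vecMulVec_apply, mul_comm]

lemma oneKronRowZero_mul_transpose_self (r : Fin m → ℝ) :
    oneKronRowZero n r * (oneKronRowZero n r)ᵀ =
      stlsEnorm r ^ 2 • (1 : Matrix (Fin n) (Fin n) ℝ) := by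
  ext a b
  simp only [Matrix.mul_apply, Fintype.sum_prod_type]
  simp [Fintype.sum_sum_type, Matrix.one_apply, stlsEnorm_sq, dotProduct, add_comm]

end Kronecker

lemma KSTLS_eq_neg {m n : ℕ} (A : Matrix (Fin m) (Fin n) ℝ) (x : Fin n → ℝ) (r : Fin m → ℝ)
    (M : Matrix (Fin n) (Fin n) ℝ) :
    KSTLS A x r M = -(M⁻¹ * (Aᵀ * householder r * rowAugKron m x + oneKronRowZero n r)) := by
  rw [KSTLS, ← rowAugKron, ← oneKronRowZero, householder, ← stlsEnorm_sq]
  simp only [Matrix.mul_sub, Matrix.sub_mul, Matrix.mul_add, Matrix.mul_one, Matrix.mul_smul]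
  abel

lemma householder_rowAugKron_add_mul_transpose_self {m n : ℕ} (A : Matrix (Fin m) (Fin n) ℝ)
    (x : Fin n → ℝ) (r : Fin m → ℝ) :
    (Aᵀ * householder r * rowAugKron m x + oneKronRowZero n r) *
        (Aᵀ * householder r * rowAugKron m x + oneKronRowZero n r)ᵀ =
      (1 + stlsEnorm x ^ 2) • (Aᵀ * A) - Aᵀ * vecMulVec r x - vecMulVec x r * A +
        stlsEnorm r ^ 2 • (1 : Matrix (Fin n) (Fin n) ℝ) := by
  set H := householder r
  set P := rowAugKron m x
  set Q := oneKronRowZero n r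
  have hHHt : H * Hᵀ = 1 := (mem_orthogonalGroup_iff _ _).1 (householder_mem_orthogonalGroup r)
  have hPP : Aᵀ * H * P * (Aᵀ * H * P)ᵀ = (1 + stlsEnorm x ^ 2) • (Aᵀ * A) := by
    rw [transpose_mul, transpose_mul, Matrix.mul_assoc, ← Matrix.mul_assoc P,
      rowAugKron_mul_transpose_self, Matrix.smul_mul, Matrix.one_mul, Matrix.mul_smul,
      ← Matrix.mul_assoc (Aᵀ * H), Matrix.mul_assoc Aᵀ, hHHt, Matrix.mul_one, transpose_transpose]
  have hPQ : Aᵀ * H * P * Qᵀ = -(Aᵀ * vecMulVec r x) := by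
    rw [Matrix.mul_assoc, rowAugKron_mul_transpose_oneKronRowZero, Matrix.mul_assoc,
      mul_vecMulVec, householder_mulVec_self, neg_vecMulVec, Matrix.mul_neg]
  have hQP : Q * (Aᵀ * H * P)ᵀ = -(vecMulVec x r * A) := by
    rw [← transpose_transpose Q, ← transpose_mul, hPQ, transpose_neg, transpose_mul,
      transpose_vecMulVec, transpose_transpose]
  rw [transpose_add, Matrix.add_mul, Matrix.mul_add, Matrix.mul_add, hPP, hPQ, hQP,
    oneKronRowZero_mul_transpose_self]
  abel

theorem KSTLS_mul_transpose_general {m n : ℕ} (A : Matrix (Fin m) (Fin n) ℝ) (x : Fin n → ℝ)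
    (r : Fin m → ℝ) (M : Matrix (Fin n) (Fin n) ℝ) (hMs : Mᵀ = M) :
    KSTLS A x r M * (KSTLS A x r M)ᵀ =
      M⁻¹ *
        ((1 + stlsEnorm x ^ 2) • (Aᵀ * A) - Aᵀ * vecMulVec r x - vecMulVec x r * A +
          stlsEnorm r ^ 2 • (1 : Matrix (Fin n) (Fin n) ℝ)) * M⁻¹ := by
  rw [KSTLS_eq_neg, transpose_neg, Matrix.neg_mul, Matrix.mul_neg, neg_neg, transpose_mul,
    transpose_nonsing_inv, hMs, Matrix.mul_assoc, ← Matrix.mul_assoc _ _ M⁻¹,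
    householder_rowAugKron_add_mul_transpose_self, Matrix.mul_assoc]

/-- Equation (eqblk5): `K Kᵀ = M⁻¹((1+‖x‖²)AᵀA − Aᵀr xᵀ − x rᵀA + ‖r‖²I)M⁻¹`. -/
theorem KSTLS_mul_transpose {m n : ℕ} (A : Matrix (Fin m) (Fin n) ℝ) (x : Fin n → ℝ)
    (r : Fin m → ℝ) (M : Matrix (Fin n) (Fin n) ℝ) (hM : IsUnit M) (hMs : Mᵀ = M)
    (hr : r ≠ 0) :
    KSTLS A x r M * (KSTLS A x r M)ᵀ =
      M⁻¹ *
        ((1 + stlsEnorm x ^ 2) • (Aᵀ * A) - Aᵀ * vecMulVec r x - vecMulVec x r * A +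
          stlsEnorm r ^ 2 • (1 : Matrix (Fin n) (Fin n) ℝ)) * M⁻¹ :=
  KSTLS_mul_transpose_general A x r M hMs
end

section
/- Let A ∈ ℝ^{m×n}, σ ∈ ℝ with M = Aᵀ A − σ² I_n invertible, x = M⁻¹ Aᵀ b, r = A x − b. Then (1+‖x‖²) Aᵀ A − Aᵀ r xᵀ − x rᵀ A + ‖r‖² I_n = (1+‖x‖²)(Aᵀ A + σ² (I_n − (2/(1+‖x‖²)) x xᵀ)) + (‖r‖² − σ²(1+‖x‖²)) I_n, and when additionally ‖r‖² = σ²(1+‖x‖²) (which holds for the TLS solution), it equals (1+‖x‖²)(Aᵀ A + σ²(I_n − (2/(1+‖x‖²)) x xᵀ)). -/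
open Matrix

/-- The Euclidean norm of a real vector. -/
noncomputable def euclidEnorm {n : Type*} [Fintype n] (v : n → ℝ) : ℝ :=
  Real.sqrt (∑ i, v i ^ 2)

/-!
Write `M = AᵀA - σ²I`. The normal equation `M x = Aᵀ b` says exactly that the residual
`r = A x - b` satisfies `Aᵀ r = σ² x`. Hence both rank-one terms `Aᵀ r xᵀ` and `x rᵀ A` equal
`σ² x xᵀ`, and the identity reduces to linear algebra in the span of `AᵀA`, `x xᵀ` and `I`.
The TLS condition `‖r‖² = σ²(1 + ‖x‖²)` then kills the multiple of `I`.
-/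

namespace Matrix

variable {R m n : Type*} [Fintype m]

theorem transpose_mulVec_residual_eq_smul [Fintype n] [DecidableEq n] [CommRing R]
    (A : Matrix m n R) (b : m → R) (c : R) (x : n → R) (h : (Aᵀ * A - c • (1 : Matrix n n R)) *ᵥ x = Aᵀ *ᵥ b) :
    Aᵀ *ᵥ (A *ᵥ x - b) = c • x := by
  rw [sub_mulVec, smul_mulVec, one_mulVec, ← mulVec_mulVec] at h
  rw [mulVec_sub, ← h, sub_sub_cancel]

theorem transpose_mul_vecMulVec_add_vecMulVec_mul [CommRing R] (A : Matrix m n R) (r : m → R)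
    (x : n → R) (c : R) (h : Aᵀ *ᵥ r = c • x) :
    Aᵀ * vecMulVec r x + vecMulVec x r * A = (2 * c) • vecMulVec x x := by
  rw [mul_vecMulVec, vecMulVec_mul, ← mulVec_transpose, h, smul_vecMulVec, vecMulVec_smul,
    ← add_smul, two_mul]

theorem smul_gram_sub_vecMulVec_add_smul_one [Fintype n] [DecidableEq n] [Field R]
    (A : Matrix m n R) (r : m → R) (x : n → R) (c t ρ : R) (h : Aᵀ *ᵥ r = c • x) (ht : t ≠ 0) :
    t • (Aᵀ * A) - Aᵀ * vecMulVec r x - vecMulVec x r * A + ρ • (1 : Matrix n n R) =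
      t • (Aᵀ * A + c • ((1 : Matrix n n R) - (2 / t) • vecMulVec x x)) +
        (ρ - c * t) • (1 : Matrix n n R) := by
  rw [sub_sub, transpose_mul_vecMulVec_add_vecMulVec_mul A r x c h]
  match_scalars <;> field_simp; ring

end Matrix

/-- Baboulin–Gratton's identity (eqform21) for the TLS/STLS condition-number kernel. -/
theorem kernel_baboulin_gratton {m n : ℕ} (A : Matrix (Fin m) (Fin n) ℝ) (b : Fin m → ℝ)
    (σ : ℝ) (hM : IsUnit (Aᵀ * A - σ ^ 2 • (1 : Matrix (Fin n) (Fin n) ℝ)))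
    (x : Fin n → ℝ) (r : Fin m → ℝ)
    (hx : x = (Aᵀ * A - σ ^ 2 • (1 : Matrix (Fin n) (Fin n) ℝ))⁻¹ *ᵥ (Aᵀ *ᵥ b))
    (hr : r = A *ᵥ x - b) :
    (1 + euclidEnorm x ^ 2) • (Aᵀ * A) - Aᵀ * vecMulVec r x - vecMulVec x r * A +
          euclidEnorm r ^ 2 • (1 : Matrix (Fin n) (Fin n) ℝ) =
        (1 + euclidEnorm x ^ 2) •
            (Aᵀ * A +
              σ ^ 2 • ((1 : Matrix (Fin n) (Fin n) ℝ) - (2 / (1 + euclidEnorm x ^ 2)) • vecMulVec x x)) +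
          (euclidEnorm r ^ 2 - σ ^ 2 * (1 + euclidEnorm x ^ 2)) • (1 : Matrix (Fin n) (Fin n) ℝ) ∧
      (euclidEnorm r ^ 2 = σ ^ 2 * (1 + euclidEnorm x ^ 2) →
        (1 + euclidEnorm x ^ 2) • (Aᵀ * A) - Aᵀ * vecMulVec r x - vecMulVec x r * A +
            euclidEnorm r ^ 2 • (1 : Matrix (Fin n) (Fin n) ℝ) =
          (1 + euclidEnorm x ^ 2) •
            (Aᵀ * A +
              σ ^ 2 • ((1 : Matrix (Fin n) (Fin n) ℝ) - (2 / (1 + euclidEnorm x ^ 2)) • vecMulVec x x))) := by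
  have hnormal : (Aᵀ * A - σ ^ 2 • (1 : Matrix (Fin n) (Fin n) ℝ)) *ᵥ x = Aᵀ *ᵥ b := by
    rw [hx, mulVec_mulVec, mul_nonsing_inv _ ((isUnit_iff_isUnit_det _).mp hM), one_mulVec]
  have hresidual : Aᵀ *ᵥ r = σ ^ 2 • x := hr ▸ transpose_mulVec_residual_eq_smul A b _ x hnormal
  have hpos : 1 + euclidEnorm x ^ 2 ≠ 0 := by positivity
  have hkernel := smul_gram_sub_vecMulVec_add_smul_one A r x _ _ (euclidEnorm r ^ 2) hresidual hpos
  refine ⟨hkernel, fun htls => ?_⟩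
  rw [hkernel, htls, sub_self, zero_smul, add_zero]
end
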